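/- Let H ∈ ℝ^{m×n} have SVD H = U diag(σ₁,…,σ_p) Vᵀ with p = min(m,n), and let τ > 0. Then the matrix X* = U diag(max(σ_i − τ, 0)) Vᵀ is a global minimizer of f(X) = ‖X‖_* + (1/(2τ))‖X − H‖_F², where ‖X‖_* denotes the matrix nuclear norm. -/

import Mathlib

open Matrix

/-- The nuclear norm of a real matrix: the trace of √(Aᵀ A). -/
noncomputable def nucNorm {m n : ℕ} (A : Matrix (Fin m) (Fin n) ℝ) : ℝ :=
  ((Matrix.posSemidef_conjTranspose_mul_self A).1.eigenvectorUnitary.1 *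
    diagonal ((RCLike.ofReal : ℝ → ℝ) ∘ (√·) ∘ (Matrix.posSemidef_conjTranspose_mul_self A).1.eigenvalues) *
    (star (Matrix.posSemidef_conjTranspose_mul_self A).1.eigenvectorUnitary : Matrix (Fin n) (Fin n) ℝ)).trace

/-- The squared Frobenius norm of a real matrix. -/
def frobSq {m n : ℕ} (A : Matrix (Fin m) (Fin n) ℝ) : ℝ :=
  ∑ i, ∑ j, (A i j) ^ 2

/-! The soft-thresholded matrix satisfies the optimality condition `H - X* ∈ τ ∂‖X*‖_*`.
Let `S` be the thresholded diagonal and `E = (D - S) / τ = min(D, τ) / τ` entrywise. The matrix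
`G = U E Vᵀ` has operator norm at most one, since the diagonal entries of `E` lie in `[0, 1]`,
and `⟪G, X*⟫ = ‖X*‖_*`, since `E = 1` wherever `S ≠ 0`. Duality of the nuclear and operator norms
gives `⟪G, X⟫ ≤ ‖X‖_*` for every `X`, and expanding `‖X - H‖_F² = ‖(X - X*) + (X* - H)‖_F²`
with `X* - H = -τ G` yields `f(X) - f(X*) ≥ ‖X‖_* - ⟪G, X⟫ ≥ 0`. -/

open scoped MatrixOrder

variable {m n : ℕ}

lemma nucNorm_eq_trace_sqrt (A : Matrix (Fin m) (Fin n) ℝ) :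
    nucNorm A = (CFC.sqrt (Aᵀ * A)).trace := by
  have hA := posSemidef_conjTranspose_mul_self A
  rw [nucNorm, ← conjTranspose_eq_transpose_of_trivial, CFC.sqrt_eq_real_sqrt _ hA.nonneg,
    cfcₙ_eq_cfc, hA.1.cfc_eq]
  rfl

lemma nucNorm_eq_trace_of_mul_self_eq {A : Matrix (Fin m) (Fin n) ℝ}
    {Q : Matrix (Fin n) (Fin n) ℝ} (hQ : Q.PosSemidef) (hQA : Q * Q = Aᵀ * A) :
    nucNorm A = Q.trace := by
  rw [nucNorm_eq_trace_sqrt, CFC.sqrt_unique hQA hQ.nonneg]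

lemma nucNorm_eq_sum_sqrt_eigenvalues (A : Matrix (Fin m) (Fin n) ℝ) :
    nucNorm A = ∑ j, √((posSemidef_conjTranspose_mul_self A).1.eigenvalues j) := by
  rw [nucNorm, trace_mul_cycle, Matrix.mul_assoc, ← Matrix.mul_assoc, Unitary.coe_star_mul_self,
    Matrix.one_mul, trace_diagonal]
  simp

lemma diag_transpose_mul_le_sqrt_mul_sqrt (A B : Matrix (Fin m) (Fin n) ℝ) (j : Fin n) :
    (Aᵀ * B) j j ≤ √((Aᵀ * A) j j) * √((Bᵀ * B) j j) := by
  simpa only [mul_apply, transpose_apply, sq] using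
    Real.sum_mul_le_sqrt_mul_sqrt Finset.univ (fun i => A i j) (fun i => B i j)

lemma trace_transpose_mul_le_sum_sqrt_diag {G : Matrix (Fin m) (Fin n) ℝ}
    (hG : (1 - Gᵀ * G).PosSemidef) (X : Matrix (Fin m) (Fin n) ℝ)
    {W : Matrix (Fin n) (Fin n) ℝ} (hW : Wᵀ * W = 1) :
    (Gᵀ * X).trace ≤ ∑ j, √(((X * W)ᵀ * (X * W)) j j) := by
  have hWW : W * Wᵀ = 1 := mul_eq_one_comm.mp hW
  have htrace : (Gᵀ * X).trace = ((G * W)ᵀ * (X * W)).trace := by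
    rw [transpose_mul, Matrix.mul_assoc, trace_mul_comm Wᵀ, Matrix.mul_assoc, Matrix.mul_assoc,
      hWW, Matrix.mul_one]
  have hGW : ∀ j, ((G * W)ᵀ * (G * W)) j j ≤ 1 := by
    intro j
    have hconj : Wᵀ * (1 - Gᵀ * G) * W = 1 - (G * W)ᵀ * (G * W) := by
      rw [Matrix.mul_sub, Matrix.sub_mul, Matrix.mul_one, hW, transpose_mul]
      simp only [Matrix.mul_assoc]
    have h := (hG.conjTranspose_mul_mul_same W).diag_nonneg (i := j)
    rw [conjTranspose_eq_transpose_of_trivial, hconj] at h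
    simpa using h
  rw [htrace, trace]
  gcongr with j
  calc ((G * W)ᵀ * (X * W)) j j
      ≤ √(((G * W)ᵀ * (G * W)) j j) * √(((X * W)ᵀ * (X * W)) j j) :=
        diag_transpose_mul_le_sqrt_mul_sqrt _ _ j
    _ ≤ 1 * √(((X * W)ᵀ * (X * W)) j j) := by gcongr; exact Real.sqrt_le_one.mpr (hGW j)
    _ = √(((X * W)ᵀ * (X * W)) j j) := one_mul _

theorem trace_transpose_mul_le_nucNorm {G : Matrix (Fin m) (Fin n) ℝ}
    (hG : (1 - Gᵀ * G).PosSemidef) (X : Matrix (Fin m) (Fin n) ℝ) :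
    (Gᵀ * X).trace ≤ nucNorm X := by
  have hX := (posSemidef_conjTranspose_mul_self X).1
  set W : Matrix (Fin n) (Fin n) ℝ := ↑hX.eigenvectorUnitary
  have hW : Wᵀ * W = 1 := by
    simpa [W, star_eq_conjTranspose] using Unitary.coe_star_mul_self hX.eigenvectorUnitary
  have hdiag : (X * W)ᵀ * (X * W) = diagonal hX.eigenvalues := by
    simpa [W, Unitary.conjStarAlgAut_apply, star_eq_conjTranspose, transpose_mul,
      Matrix.mul_assoc] using hX.conjStarAlgAut_star_eigenvectorUnitary
  refine (trace_transpose_mul_le_sum_sqrt_diag hG X hW).trans_eq ?_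
  simp only [hdiag, diagonal_apply_eq, nucNorm_eq_sum_sqrt_eigenvalues]

lemma Matrix.PosSemidef.mul_mul_transpose_same {M : Matrix (Fin n) (Fin n) ℝ}
    (hM : M.PosSemidef) (V : Matrix (Fin n) (Fin n) ℝ) : (V * M * Vᵀ).PosSemidef := by
  simpa only [conjTranspose_eq_transpose_of_trivial] using hM.mul_mul_conjTranspose_same V

section Orthogonal

variable {U : Matrix (Fin m) (Fin m) ℝ} {V : Matrix (Fin n) (Fin n) ℝ}

lemma transpose_mul_orthogonal_conj (hU : Uᵀ * U = 1) (A B : Matrix (Fin m) (Fin n) ℝ) :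
    (U * A * Vᵀ)ᵀ * (U * B * Vᵀ) = V * (Aᵀ * B) * Vᵀ := by
  simp only [transpose_mul, transpose_transpose, Matrix.mul_assoc]
  rw [← Matrix.mul_assoc Uᵀ, hU, Matrix.one_mul]

lemma trace_orthogonal_conj (hV : Vᵀ * V = 1) (M : Matrix (Fin n) (Fin n) ℝ) :
    (V * M * Vᵀ).trace = M.trace := by
  rw [trace_mul_cycle, hV, Matrix.one_mul]

lemma nucNorm_orthogonal_conj (hU : Uᵀ * U = 1) (hV : Vᵀ * V = 1)
    (A : Matrix (Fin m) (Fin n) ℝ) : nucNorm (U * A * Vᵀ) = nucNorm A := by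
  obtain ⟨Q, hQ, hQQ, hA⟩ : ∃ Q : Matrix (Fin n) (Fin n) ℝ,
      Q.PosSemidef ∧ Q * Q = Aᵀ * A ∧ nucNorm A = Q.trace :=
    ⟨_, nonneg_iff_posSemidef.mp (CFC.sqrt_nonneg _),
      CFC.sqrt_mul_sqrt_self _ (posSemidef_conjTranspose_mul_self A).nonneg,
      nucNorm_eq_trace_sqrt A⟩
  rw [hA, ← trace_orthogonal_conj hV]
  refine nucNorm_eq_trace_of_mul_self_eq (hQ.mul_mul_transpose_same V) ?_
  rw [transpose_mul_orthogonal_conj hU, ← hQQ]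
  simp only [Matrix.mul_assoc]
  rw [← Matrix.mul_assoc Vᵀ, hV, Matrix.one_mul]

lemma posSemidef_one_sub_transpose_mul_self_orthogonal_conj (hU : Uᵀ * U = 1)
    (hV : Vᵀ * V = 1) {E : Matrix (Fin m) (Fin n) ℝ} (hE : (1 - Eᵀ * E).PosSemidef) :
    (1 - (U * E * Vᵀ)ᵀ * (U * E * Vᵀ)).PosSemidef := by
  have hVV : V * Vᵀ = 1 := mul_eq_one_comm.mp hV
  have hconj : V * (1 - Eᵀ * E) * Vᵀ = 1 - V * (Eᵀ * E) * Vᵀ := by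
    rw [Matrix.mul_sub, Matrix.sub_mul, Matrix.mul_one, hVV]
  rw [transpose_mul_orthogonal_conj hU, ← hconj]
  exact hE.mul_mul_transpose_same V

end Orthogonal

lemma frobSq_eq_trace (A : Matrix (Fin m) (Fin n) ℝ) : frobSq A = (Aᵀ * A).trace := by
  rw [frobSq, trace, Finset.sum_comm]
  simp only [diag_apply, mul_apply, transpose_apply, sq]

lemma frobSq_nonneg (A : Matrix (Fin m) (Fin n) ℝ) : 0 ≤ frobSq A :=
  Finset.sum_nonneg fun _ _ => Finset.sum_nonneg fun _ _ => sq_nonneg _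

lemma frobSq_add (A B : Matrix (Fin m) (Fin n) ℝ) :
    frobSq (A + B) = frobSq A + 2 * (Bᵀ * A).trace + frobSq B := by
  rw [frobSq_eq_trace, frobSq_eq_trace, frobSq_eq_trace, transpose_add, Matrix.add_mul,
    Matrix.mul_add, Matrix.mul_add, trace_add, trace_add, trace_add, ← trace_transpose (Aᵀ * B),
    transpose_mul, transpose_transpose]
  ring

theorem nucNorm_add_frobSq_le_of_subgradient {τ : ℝ} (hτ : 0 < τ)
    {H Xs G : Matrix (Fin m) (Fin n) ℝ} (hG : (1 - Gᵀ * G).PosSemidef)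
    (hGXs : (Gᵀ * Xs).trace = nucNorm Xs) (hres : H - Xs = τ • G)
    (X : Matrix (Fin m) (Fin n) ℝ) :
    nucNorm Xs + 1 / (2 * τ) * frobSq (Xs - H) ≤ nucNorm X + 1 / (2 * τ) * frobSq (X - H) := by
  have hcross : ((Xs - H)ᵀ * (X - Xs)).trace = -τ * ((Gᵀ * X).trace - (Gᵀ * Xs).trace) := by
    rw [← neg_sub, hres, transpose_neg, transpose_smul, Matrix.neg_mul, Matrix.smul_mul,
      Matrix.mul_sub, trace_neg, trace_smul, trace_sub, smul_eq_mul, neg_mul]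
  have hdual := trace_transpose_mul_le_nucNorm hG X
  rw [← sub_add_sub_cancel X Xs H, frobSq_add, hcross, hGXs]
  field_simp
  nlinarith [frobSq_nonneg (X - Xs)]

section SoftThreshold

variable {τ : ℝ}

lemma sub_max_sub_zero (d : ℝ) : d - max (d - τ) 0 = min d τ := by
  rcases le_total d τ with h | h
  · rw [max_eq_right (by linarith), min_eq_left h, sub_zero]
  · rw [max_eq_left (by linarith), min_eq_right h, sub_sub_cancel]

lemma min_div_mul_max_sub_zero (hτ : τ ≠ 0) (c : ℝ) :
    min c τ / τ * max (c - τ) 0 = max (c - τ) 0 := by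
  rcases le_total c τ with h | h
  · rw [max_eq_right (by linarith), mul_zero]
  · rw [min_eq_right h, div_self hτ, one_mul]

lemma sq_min_div_le_one (hτ : 0 < τ) {c : ℝ} (hc : 0 ≤ c) : (min c τ / τ) ^ 2 ≤ 1 := by
  have h0 : 0 ≤ min c τ / τ := div_nonneg (le_min hc hτ.le) hτ.le
  have h1 : min c τ / τ ≤ 1 := (div_le_one hτ).mpr (min_le_right c τ)
  nlinarith

end SoftThreshold

section RectangularDiagonal

variable {D : Matrix (Fin m) (Fin n) ℝ}

lemma sum_comp_col_of_rectDiag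
    (hD : ∀ (i : Fin m) (j : Fin n), (i : ℕ) ≠ (j : ℕ) → D i j = 0)
    {f : ℝ → ℝ} (hf : f 0 = 0) (j : Fin n) : ∑ i, f (D i j) = f (∑ i, D i j) := by
  by_cases hj : (j : ℕ) < m
  · have hsingle : ∀ g : ℝ → ℝ, g 0 = 0 → ∑ i, g (D i j) = g (D ⟨j, hj⟩ j) := fun g hg =>
      Finset.sum_eq_single _ (fun i _ hi => by rw [hD i j fun h => hi (Fin.ext h), hg])
        (by simp)
    exact (hsingle f hf).trans (congrArg f (hsingle id rfl).symm)
  · have hzero : ∀ i, D i j = 0 := fun i => hD i j (by omega)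
    simp [hzero, hf]

lemma map_transpose_mul_map_of_rectDiag
    (hD : ∀ (i : Fin m) (j : Fin n), (i : ℕ) ≠ (j : ℕ) → D i j = 0)
    {f g : ℝ → ℝ} (hf : f 0 = 0) (hg : g 0 = 0) :
    (D.map f)ᵀ * D.map g = diagonal fun j => f (∑ i, D i j) * g (∑ i, D i j) := by
  ext j k
  rw [mul_apply]
  rcases eq_or_ne j k with rfl | hjk
  · simpa using sum_comp_col_of_rectDiag hD (f := fun x => f x * g x) (by simp [hf]) j
  · rw [diagonal_apply_ne _ hjk]
    refine Finset.sum_eq_zero fun i _ => ?_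
    by_cases hij : (i : ℕ) = j
    · rw [map_apply, hD i k fun h => hjk (Fin.ext (hij.symm.trans h)), hg, mul_zero]
    · rw [transpose_apply, map_apply, hD i j hij, hf, zero_mul]

lemma nucNorm_map_of_rectDiag
    (hD : ∀ (i : Fin m) (j : Fin n), (i : ℕ) ≠ (j : ℕ) → D i j = 0)
    {f : ℝ → ℝ} (hf : f 0 = 0) (hpos : ∀ j, 0 ≤ f (∑ i, D i j)) :
    nucNorm (D.map f) = ∑ j, f (∑ i, D i j) := by
  refine (nucNorm_eq_trace_of_mul_self_eq (posSemidef_diagonal_iff.mpr hpos) ?_).trans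
    (trace_diagonal _)
  rw [diagonal_mul_diagonal, map_transpose_mul_map_of_rectDiag hD hf hf]

lemma posSemidef_one_sub_map_transpose_mul_map_of_rectDiag
    (hD : ∀ (i : Fin m) (j : Fin n), (i : ℕ) ≠ (j : ℕ) → D i j = 0)
    {f : ℝ → ℝ} (hf : f 0 = 0) (hle : ∀ j, f (∑ i, D i j) ^ 2 ≤ 1) :
    (1 - (D.map f)ᵀ * D.map f).PosSemidef := by
  rw [map_transpose_mul_map_of_rectDiag hD hf hf, ← diagonal_one, diagonal_sub]
  exact posSemidef_diagonal_iff.mpr fun j => by simpa [sq] using hle j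

end RectangularDiagonal

theorem stmt_5 (m n : ℕ) (τ : ℝ) (hτ : 0 < τ)
    (H D : Matrix (Fin m) (Fin n) ℝ)
    (U : Matrix (Fin m) (Fin m) ℝ) (V : Matrix (Fin n) (Fin n) ℝ)
    (hU : Uᵀ * U = 1) (hV : Vᵀ * V = 1)
    (hDdiag : ∀ (i : Fin m) (j : Fin n), (i : ℕ) ≠ (j : ℕ) → D i j = 0)
    (hDpos : ∀ i j, 0 ≤ D i j)
    (hH : H = U * D * Vᵀ)
    (Xs : Matrix (Fin m) (Fin n) ℝ)
    (hXs : Xs = U * (Matrix.of fun i j => max (D i j - τ) 0) * Vᵀ) :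
    ∀ X : Matrix (Fin m) (Fin n) ℝ,
      nucNorm Xs + 1 / (2 * τ) * frobSq (Xs - H) ≤
        nucNorm X + 1 / (2 * τ) * frobSq (X - H) := by
  set shrink : ℝ → ℝ := fun d => max (d - τ) 0
  set clip : ℝ → ℝ := fun d => min d τ / τ
  have hXs' : Xs = U * D.map shrink * Vᵀ := hXs
  have hcol : ∀ j, 0 ≤ ∑ i, D i j := fun j => Finset.sum_nonneg fun i _ => hDpos i j
  have hshrink0 : shrink 0 = 0 := by simp [shrink, hτ.le]
  have hclip0 : clip 0 = 0 := by simp [clip, hτ.le]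
  refine nucNorm_add_frobSq_le_of_subgradient hτ (G := U * D.map clip * Vᵀ) ?_ ?_ ?_
  · exact posSemidef_one_sub_transpose_mul_self_orthogonal_conj hU hV
      (posSemidef_one_sub_map_transpose_mul_map_of_rectDiag hDdiag hclip0
        fun j => sq_min_div_le_one hτ (hcol j))
  · rw [hXs', transpose_mul_orthogonal_conj hU, trace_orthogonal_conj hV,
      nucNorm_orthogonal_conj hU hV,
      nucNorm_map_of_rectDiag hDdiag hshrink0 fun _ => le_max_right _ _,
      map_transpose_mul_map_of_rectDiag hDdiag hclip0 hshrink0, trace_diagonal]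
    simp only [clip, shrink, min_div_mul_max_sub_zero hτ.ne']
  · rw [hH, hXs', ← Matrix.smul_mul, ← Matrix.mul_smul, ← Matrix.sub_mul, ← Matrix.mul_sub]
    congr 2
    ext i j
    rw [Matrix.sub_apply, Matrix.smul_apply, map_apply, map_apply, smul_eq_mul,
      mul_div_cancel₀ _ hτ.ne', sub_max_sub_zero]
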